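/- Let M and F be real numbers with F < 1, and let X, Y, Z be positive integers admitting representations as products of degrees n_X, n_Y, n_Z, with bases b_X, b_Y, b_Z and spreads s_X, s_Y, s_Z, such that s_X + 1 < n_X, s_Y + 1 < n_Y, s_Z + 1 < n_Z, s_X²/b_X ≤ M, s_Y²/b_Y ≤ M, s_Z²/b_Z ≤ M, and (s_X+1)/n_X + (s_Y+1)/n_Y + (s_Z+1)/n_Z ≤ F. If moreover X ≤ Z and Y ≤ Z, then rad(X·Y·Z) ≤ e^{6M} · Z^{F}, where Z^{F} denotes the real power. -/

import Mathlib

/-!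
Each factor of a representation of `X` with base `b` and spread `s` lies in `[b, b + s]`, so
every prime factor of `X` divides `N = b (b + 1) ⋯ (b + s)`, whence `rad X ≤ N`. Since
`1 + j / b ≤ e^{j / b}`, we get `N ≤ b^{s+1} e^{s² / b}`, and `b^d ≤ X` turns `b^{s+1}` into
`X^{(s+1)/d}`. Multiplying the three bounds, with `X, Y ≤ Z`, and using submultiplicativity of
`rad` gives `rad (X Y Z) ≤ e^{3M} Z^F`.
-/

/-- The radical of a natural number: the product of its distinct prime divisors. -/
def rad (n : ℕ) : ℕ := ∏ p ∈ n.primeFactors, p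

/-- `IsProductRep X d b s` : `X` admits a representation as a product of `d` positive
integers with base (minimum) `b` and spread (max − min) `s`. -/
def IsProductRep (X d b s : ℕ) : Prop :=
  ∃ f : Fin d → ℕ, (∀ i, 0 < f i) ∧ (∏ i, f i) = X ∧
    (∀ i, b ≤ f i ∧ f i ≤ b + s) ∧ (∃ i, f i = b) ∧ (∃ i, f i = b + s)

open Finset Real

lemma rad_pos (n : ℕ) : 0 < rad n :=
  prod_pos fun _ hp => (Nat.prime_of_mem_primeFactors hp).pos

lemma rad_mul_le (m n : ℕ) : rad (m * n) ≤ rad m * rad n := by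
  rw [rad, rad, rad, ← Nat.prod_primeFactors_gcd_mul_prod_primeFactors_mul m n fun p => p]
  exact Nat.le_mul_of_pos_left _ (rad_pos _)

lemma rad_le_of_dvd_pow {X N d : ℕ} (hN : N ≠ 0) (h : X ∣ N ^ d) : rad X ≤ N := by
  have hX : X ≠ 0 := ne_zero_of_dvd_ne_zero (pow_ne_zero d hN) h
  have hsub : X.primeFactors ⊆ N.primeFactors := (Nat.exists_dvd_pow_iff hX hN).1 ⟨d, h⟩
  exact Nat.le_of_dvd (Nat.pos_of_ne_zero hN)
    ((prod_dvd_prod_of_subset _ _ _ hsub).trans (Nat.prod_primeFactors_dvd N))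

lemma sum_range_succ_id_le_sq (s : ℕ) : ∑ j ∈ range (s + 1), j ≤ s ^ 2 := by
  have := sum_range_id_mul_two (s + 1)
  rw [Nat.add_sub_cancel] at this
  nlinarith

lemma prod_range_succ_add_le {b : ℝ} (hb : 0 < b) (s : ℕ) :
    ∏ j ∈ range (s + 1), (b + j) ≤ b ^ (s + 1) * exp (s ^ 2 / b) := by
  have hfactor :
      ∏ j ∈ range (s + 1), (b + j) = b ^ (s + 1) * ∏ j ∈ range (s + 1), (1 + j / b) := by
    rw [pow_eq_prod_const, ← prod_mul_distrib]
    refine prod_congr rfl fun j _ => ?_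
    field_simp
  have hsum : ∑ j ∈ range (s + 1), (j : ℝ) / b ≤ s ^ 2 / b := by
    rw [← sum_div]
    gcongr
    simpa using (Nat.cast_le (α := ℝ)).2 (sum_range_succ_id_le_sq s)
  rw [hfactor]
  gcongr
  exact (prod_one_add_le_exp_sum _ fun j => by positivity).trans (exp_le_exp.2 hsum)

lemma pow_le_rpow_div_of_pow_le {b X : ℝ} (hb : 0 ≤ b) {d : ℕ} (hd : d ≠ 0) (hbX : b ^ d ≤ X)
    (k : ℕ) : b ^ k ≤ X ^ ((k : ℝ) / d) := by
  have hroot : b ≤ X ^ (d⁻¹ : ℝ) := by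
    calc b = (b ^ d) ^ (d⁻¹ : ℝ) := (pow_rpow_inv_natCast hb hd).symm
      _ ≤ X ^ (d⁻¹ : ℝ) := by gcongr
  calc b ^ k ≤ (X ^ (d⁻¹ : ℝ)) ^ k := by gcongr
    _ = X ^ ((k : ℝ) / d) := by
      rw [← rpow_mul_natCast ((pow_nonneg hb d).trans hbX), inv_mul_eq_div]

namespace IsProductRep

variable {X d b s : ℕ}

lemma base_pos (h : IsProductRep X d b s) : 0 < b := by
  obtain ⟨f, hpos, -, -, ⟨i, rfl⟩, -⟩ := h
  exact hpos i

lemma degree_ne_zero (h : IsProductRep X d b s) : d ≠ 0 := by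
  rintro rfl
  obtain ⟨-, -, -, -, ⟨i, -⟩, -⟩ := h
  exact i.elim0

lemma pos (h : IsProductRep X d b s) : 0 < X := by
  obtain ⟨f, hpos, rfl, -⟩ := h
  exact prod_pos fun i _ => hpos i

lemma base_pow_le (h : IsProductRep X d b s) : b ^ d ≤ X := by
  obtain ⟨f, -, rfl, hbound, -⟩ := h
  simpa using prod_le_prod' (s := univ) fun i _ => (hbound i).1

lemma dvd_prod_range_pow (h : IsProductRep X d b s) :
    X ∣ (∏ j ∈ range (s + 1), (b + j)) ^ d := by
  obtain ⟨f, -, rfl, hbound, -⟩ := h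
  rw [← Fin.prod_const]
  refine prod_dvd_prod_of_dvd _ _ fun i _ => ?_
  obtain ⟨hlow, hhigh⟩ := hbound i
  have hmem : f i - b ∈ range (s + 1) := mem_range.2 (by omega)
  simpa [Nat.add_sub_cancel' hlow] using dvd_prod_of_mem (fun j => b + j) hmem

lemma rad_le (h : IsProductRep X d b s) :
    (rad X : ℝ) ≤ exp (s ^ 2 / b) * (X : ℝ) ^ (((s : ℝ) + 1) / d) := by
  have hb : (0 : ℝ) < b := by exact_mod_cast h.base_pos
  have hN : ∏ j ∈ range (s + 1), (b + j) ≠ 0 :=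
    prod_ne_zero_iff.2 fun j _ => (h.base_pos.trans_le (Nat.le_add_right b j)).ne'
  calc (rad X : ℝ) ≤ ((∏ j ∈ range (s + 1), (b + j) : ℕ) : ℝ) :=
        by exact_mod_cast rad_le_of_dvd_pow hN h.dvd_prod_range_pow
    _ ≤ (b : ℝ) ^ (s + 1) * exp (s ^ 2 / b) := by
        push_cast
        exact prod_range_succ_add_le hb s
    _ ≤ (X : ℝ) ^ (((s : ℝ) + 1) / d) * exp (s ^ 2 / b) := by
        gcongr
        exact_mod_cast pow_le_rpow_div_of_pow_le (Nat.cast_nonneg b) h.degree_ne_zero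
          (by exact_mod_cast h.base_pow_le) (s + 1)
    _ = _ := mul_comm _ _

lemma rad_le_of_le {M : ℝ} {Z : ℕ} (h : IsProductRep X d b s) (hM : (s : ℝ) ^ 2 / b ≤ M)
    (hXZ : X ≤ Z) : (rad X : ℝ) ≤ exp M * (Z : ℝ) ^ (((s : ℝ) + 1) / d) := by
  refine h.rad_le.trans ?_
  gcongr

end IsProductRep

theorem stmt_11_general (M F : ℝ)
    (X Y Z nX nY nZ bX bY bZ sX sY sZ : ℕ)
    (hrepX : IsProductRep X nX bX sX) (hrepY : IsProductRep Y nY bY sY)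
    (hrepZ : IsProductRep Z nZ bZ sZ)
    (hMX : ((sX : ℝ) ^ 2) / bX ≤ M) (hMY : ((sY : ℝ) ^ 2) / bY ≤ M)
    (hMZ : ((sZ : ℝ) ^ 2) / bZ ≤ M)
    (hsum : ((sX : ℝ) + 1) / nX + ((sY : ℝ) + 1) / nY + ((sZ : ℝ) + 1) / nZ ≤ F)
    (hXZ : X ≤ Z) (hYZ : Y ≤ Z) :
    (rad (X * Y * Z) : ℝ) ≤ Real.exp (6 * M) * (Z : ℝ) ^ F := by
  have hM : 0 ≤ M := (by positivity : (0 : ℝ) ≤ (sX : ℝ) ^ 2 / bX).trans hMX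
  have hZ : (1 : ℝ) ≤ Z := by exact_mod_cast hrepZ.pos
  have hrad : (rad (X * Y * Z) : ℝ) ≤ rad X * rad Y * rad Z := by
    exact_mod_cast (rad_mul_le _ _).trans (Nat.mul_le_mul_right _ (rad_mul_le X Y))
  calc (rad (X * Y * Z) : ℝ)
      ≤ (exp M * (Z : ℝ) ^ (((sX : ℝ) + 1) / nX)) * (exp M * (Z : ℝ) ^ (((sY : ℝ) + 1) / nY)) *
          (exp M * (Z : ℝ) ^ (((sZ : ℝ) + 1) / nZ)) := by
        refine hrad.trans ?_
        gcongr
        exacts [hrepX.rad_le_of_le hMX hXZ, hrepY.rad_le_of_le hMY hYZ,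
          hrepZ.rad_le_of_le hMZ le_rfl]
    _ = exp (3 * M) *
          (Z : ℝ) ^ (((sX : ℝ) + 1) / nX + ((sY : ℝ) + 1) / nY + ((sZ : ℝ) + 1) / nZ) := by
        rw [rpow_add (by positivity), rpow_add (by positivity),
          show 3 * M = M + M + M by ring, exp_add, exp_add]
        ring
    _ ≤ exp (6 * M) * (Z : ℝ) ^ F := by
        gcongr
        linarith

theorem stmt_11 (M F : ℝ) (hF : F < 1)
    (X Y Z nX nY nZ bX bY bZ sX sY sZ : ℕ)
    (hX : 0 < X) (hY : 0 < Y) (hZ : 0 < Z)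
    (hrepX : IsProductRep X nX bX sX) (hrepY : IsProductRep Y nY bY sY)
    (hrepZ : IsProductRep Z nZ bZ sZ)
    (hdX : sX + 1 < nX) (hdY : sY + 1 < nY) (hdZ : sZ + 1 < nZ)
    (hMX : ((sX : ℝ) ^ 2) / bX ≤ M) (hMY : ((sY : ℝ) ^ 2) / bY ≤ M)
    (hMZ : ((sZ : ℝ) ^ 2) / bZ ≤ M)
    (hsum : ((sX : ℝ) + 1) / nX + ((sY : ℝ) + 1) / nY + ((sZ : ℝ) + 1) / nZ ≤ F)
    (hXZ : X ≤ Z) (hYZ : Y ≤ Z) :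
    (rad (X * Y * Z) : ℝ) ≤ Real.exp (6 * M) * (Z : ℝ) ^ F :=
  stmt_11_general M F X Y Z nX nY nZ bX bY bZ sX sY sZ hrepX hrepY hrepZ hMX hMY hMZ hsum hXZ hYZ
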